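/- arXiv:0904.4778 — 2 statements merged into one kernel-verified Lean document; each statement's English description precedes it below -/
import Mathlib

section
/- Let λ, μ, ν, λ', μ', ν' be partitions with c(λ';μ',ν') ≠ 0. Then c(λ+λ'; μ+μ', ν+ν') ≥ c(λ;μ,ν). -/
/-- A partition: a weakly decreasing sequence of naturals with finitely many
nonzero terms.  `parts i` is the `(i+1)`-st part `λ_{i+1}`. -/
structure LRPartition where
  parts : ℕ → ℕ
  antitone' : ∀ ⦃i j : ℕ⦄, i ≤ j → parts j ≤ parts i
  eventually_zero : ∃ N, ∀ i, N ≤ i → parts i = 0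

namespace LRPartition

/-- Componentwise sum `λ + μ`. -/
def add (a b : LRPartition) : LRPartition where
  parts i := a.parts i + b.parts i
  antitone' := fun _ _ h => Nat.add_le_add (a.antitone' h) (b.antitone' h)
  eventually_zero := by
    obtain ⟨M, hM⟩ := a.eventually_zero
    obtain ⟨N, hN⟩ := b.eventually_zero
    refine ⟨max M N, fun i hi => ?_⟩
    show a.parts i + b.parts i = 0
    rw [hM i (le_trans (le_max_left M N) hi), hN i (le_trans (le_max_right M N) hi)]

instance : Add LRPartition := ⟨add⟩

@[simp] theorem add_parts (a b : LRPartition) (i : ℕ) :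
    (a + b).parts i = a.parts i + b.parts i := rfl

/-- The stretched partition `n • λ = (nλ₁, nλ₂, …)`. -/
def stretch (n : ℕ) (a : LRPartition) : LRPartition where
  parts i := n * a.parts i
  antitone' := fun _ _ h => Nat.mul_le_mul_left n (a.antitone' h)
  eventually_zero := by
    obtain ⟨N, hN⟩ := a.eventually_zero
    exact ⟨N, fun i hi => by show n * a.parts i = 0; rw [hN i hi, Nat.mul_zero]⟩

instance : SMul ℕ LRPartition := ⟨stretch⟩

@[simp] theorem smul_parts (n : ℕ) (a : LRPartition) (i : ℕ) :
    (n • a).parts i = n * a.parts i := rfl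

/-- Containment of Young diagrams: `μ ⊆ λ` iff `μᵢ ≤ λᵢ` for all `i`. -/
def Sub (m l : LRPartition) : Prop := ∀ i, m.parts i ≤ l.parts i

/-- The number of (nonzero) parts, `l(λ)`. -/
noncomputable def length (a : LRPartition) : ℕ := {i | a.parts i ≠ 0}.ncard

end LRPartition

/-- `u = λ ∪ λ'`: the multiset of (positive) parts of `u` is the multiset union of
those of `λ` and `λ'`, expressed via multiplicities of every positive value `t`. -/
def IsUnion (a b u : LRPartition) : Prop :=
  ∀ t : ℕ, 0 < t →
    {i | u.parts i = t}.ncard = {i | a.parts i = t}.ncard + {i | b.parts i = t}.ncard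

/-- The cells of the skew diagram `λ/μ`: boxes `(i, j)` (row `i`, column `j`,
both 0-indexed) with `μ_{i+1} ≤ j < λ_{i+1}`. -/
def skewCells (l m : LRPartition) : Set (ℕ × ℕ) :=
  {p | m.parts p.1 ≤ p.2 ∧ p.2 < l.parts p.1}

/-- `T` is a Littlewood–Richardson tableau of shape `λ/μ` and content `ν`.
`T (i, j)` records the entry in box `(i, j)`; boxes carry positive integers and `T`
vanishes off the diagram.  Rows weakly increase, columns strictly increase, the entry
`k + 1` occurs `ν_{k+1} = ν.parts k` times, and the lattice-word condition on the
reverse reading word is expressed via its initial segments: for every `r c`, the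
cells read up to position `(r, c)` are exactly those in rows `< r` together with
those in row `r` in columns `≥ c`. -/
structure IsLRTableau (l m n : LRPartition) (T : ℕ × ℕ → ℕ) : Prop where
  sub : LRPartition.Sub m l
  pos : ∀ p ∈ skewCells l m, 0 < T p
  zero : ∀ p, p ∉ skewCells l m → T p = 0
  row_weak : ∀ i j j', (i, j) ∈ skewCells l m → (i, j') ∈ skewCells l m →
    j ≤ j' → T (i, j) ≤ T (i, j')
  col_strict : ∀ i i' j, (i, j) ∈ skewCells l m → (i', j) ∈ skewCells l m →
    i < i' → T (i, j) < T (i', j)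
  content : ∀ k : ℕ, {p ∈ skewCells l m | T p = k + 1}.ncard = n.parts k
  lattice : ∀ r c k : ℕ, 0 < k →
    {p ∈ skewCells l m | (p.1 < r ∨ (p.1 = r ∧ c ≤ p.2)) ∧ T p = k + 1}.ncard ≤
      {p ∈ skewCells l m | (p.1 < r ∨ (p.1 = r ∧ c ≤ p.2)) ∧ T p = k}.ncard

/-- The Littlewood–Richardson coefficient `c(λ; μ, ν)`: the number of LR tableaux of
shape `λ/μ` and content `ν` (zero when `μ ⊄ λ`). -/
noncomputable def LRcoeff (l m n : LRPartition) : ℕ :=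
  Set.ncard {T : ℕ × ℕ → ℕ | IsLRTableau l m n T}

/-- `λ/μ` is a partition shape: `μᵢ = 0` in every nonempty row. -/
def IsPartitionShape (l m : LRPartition) : Prop :=
  ∀ i, m.parts i < l.parts i → m.parts i = 0

/-- `λ/μ` is a rotated partition shape: `λᵢ` takes the same value in all nonempty rows. -/
def IsRotatedShape (l m : LRPartition) : Prop :=
  ∀ i j, m.parts i < l.parts i → m.parts j < l.parts j → l.parts i = l.parts j

/-- A proper skew diagram: neither a partition shape nor a rotated partition. -/
def IsProperSkew (l m : LRPartition) : Prop :=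
  ¬ IsPartitionShape l m ∧ ¬ IsRotatedShape l m

/-- `λ/μ` is a basic skew diagram: `μᵢ < λᵢ` and `μᵢ ≤ λ_{i+1}` for each
`1 ≤ i ≤ l(λ)` (no empty rows or columns). -/
def IsBasicSkew (l m : LRPartition) : Prop :=
  ∀ i, 0 < l.parts i → m.parts i < l.parts i ∧ m.parts i ≤ l.parts (i + 1)

/-- `Q^{λ,μ}_{λ',μ'}(n) = Σ_ν c(nλ+λ'; nμ+μ', ν)`, the sum over all partitions `ν`. -/
noncomputable def Qfun (l m l' m' : LRPartition) (n : ℕ) : ℕ :=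
  ∑ᶠ ν : LRPartition, LRcoeff (n • l + l') (n • m + m') ν

/-- `P^{λ,μ,ν}_{λ',μ',ν'}(n) = c(nλ+λ'; nμ+μ', nν+ν')`. -/
noncomputable def Pfun (l m nu l' m' nu' : LRPartition) (n : ℕ) : ℕ :=
  LRcoeff (n • l + l') (n • m + m') (n • nu + nu')

/-- The partition `(1^a)` consisting of `a` parts equal to `1`. -/
def onesPartition (a : ℕ) : LRPartition where
  parts i := if i < a then 1 else 0
  antitone' := by intro i j h; (try dsimp only); split_ifs <;> omega
  eventually_zero := ⟨a, fun i hi => by (try dsimp only); split_ifs <;> omega⟩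

/-- The partition `(a)` with a single part `a` (the empty partition if `a = 0`). -/
def singlePartition (a : ℕ) : LRPartition where
  parts i := if i = 0 then a else 0
  antitone' := by intro i j h; (try dsimp only); split_ifs <;> omega
  eventually_zero := ⟨1, fun i hi => by (try dsimp only); split_ifs <;> omega⟩

/-!
Encode a filling `T` of `λ/μ` by its row cuts `s i k = μᵢ + #{entries ≤ k in row i}`. For an LR
tableau, semistandardness, content and the lattice condition become linear inequalities in `s`
(`IsLRCuts`), and `T` is recovered from `s`. Adding the cuts of a fixed LR tableau of shape
`λ'/μ'` and content `ν'` therefore maps LR tableaux of shape `λ/μ` and content `ν` injectively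
to LR tableaux of shape `(λ+λ')/(μ+μ')` and content `ν+ν'`.
-/

lemma Set.ncard_eq_sum_ncard_row {S : Set (ℕ × ℕ)} (hS : S.Finite) {R : ℕ}
    (hR : ∀ p ∈ S, p.1 < R) :
    S.ncard = ∑ i ∈ Finset.range R, {j | (i, j) ∈ S}.ncard := by
  classical
  rw [Set.ncard_eq_toFinset_card S hS,
    Finset.card_eq_sum_card_fiberwise (f := Prod.fst) (t := Finset.range R)
      fun p hp => Finset.mem_range.2 (hR p (hS.mem_toFinset.1 hp))]
  refine Finset.sum_congr rfl fun i _ => ?_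
  rw [← Set.ncard_coe_finset,
    ← Set.ncard_image_of_injective {j | (i, j) ∈ S} (Prod.mk_right_injective i)]
  congr 1
  ext ⟨a, b⟩
  simp only [Finset.coe_filter, Set.Finite.mem_toFinset, Set.mem_image, Prod.mk.injEq]
  constructor
  · rintro ⟨h, rfl⟩
    exact ⟨b, h, rfl, rfl⟩
  · rintro ⟨b, h, rfl, rfl⟩
    exact ⟨h, rfl⟩

lemma mem_skewCells_mk {l m : LRPartition} {i j : ℕ} :
    (i, j) ∈ skewCells l m ↔ m.parts i ≤ j ∧ j < l.parts i := Iff.rfl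

lemma fst_lt_of_mem_skewCells {l m : LRPartition} {R : ℕ} (hR : ∀ i, R ≤ i → l.parts i = 0)
    {p : ℕ × ℕ} (hp : p ∈ skewCells l m) : p.1 < R := by
  by_contra hle
  have := hR p.1 (not_lt.1 hle)
  have := hp.2
  omega

lemma skewCells_finite (l m : LRPartition) : (skewCells l m).Finite := by
  obtain ⟨R, hR⟩ := l.eventually_zero
  refine ((Set.finite_Iio R).prod (Set.finite_Iio (l.parts 0))).subset fun p hp => ?_
  exact ⟨fst_lt_of_mem_skewCells hR hp, hp.2.trans_le (l.antitone' (Nat.zero_le _))⟩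

def rowCount (s : ℕ → ℕ → ℕ) (i k : ℕ) : ℕ := s i (k + 1) - s i k

structure IsRowCuts (l m : LRPartition) (T : ℕ × ℕ → ℕ) (s : ℕ → ℕ → ℕ) : Prop where
  le_cut : ∀ i k, m.parts i ≤ s i k
  cut_le : ∀ i k, s i k ≤ l.parts i
  le_iff_lt_cut : ∀ {i j}, (i, j) ∈ skewCells l m → ∀ k, T (i, j) ≤ k ↔ j < s i k

namespace IsRowCuts

variable {l m : LRPartition} {T T' : ℕ × ℕ → ℕ} {s s' : ℕ → ℕ → ℕ}

lemma monotone (h : IsRowCuts l m T s) (i : ℕ) : Monotone (s i) := by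
  intro k k' hkk
  by_contra! hlt
  have hc : (i, s i k') ∈ skewCells l m := ⟨h.le_cut i k', hlt.trans_le (h.cut_le i k)⟩
  have := (h.le_iff_lt_cut hc k).2 hlt
  exact lt_irrefl _ ((h.le_iff_lt_cut hc k').1 (this.trans hkk))

lemma cuts_eq (h : IsRowCuts l m T s) (h' : IsRowCuts l m T s') : s = s' := by
  have key : ∀ {s s'}, IsRowCuts l m T s → IsRowCuts l m T s' → ∀ i k, s i k ≤ s' i k := by
    intro s s' h h' i k
    by_contra! hlt
    have hc : (i, s' i k) ∈ skewCells l m := ⟨h'.le_cut i k, hlt.trans_le (h.cut_le i k)⟩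
    exact lt_irrefl _ ((h'.le_iff_lt_cut hc k).1 ((h.le_iff_lt_cut hc k).2 hlt))
  funext i k
  exact le_antisymm (key h h' i k) (key h' h i k)

lemma eqOn (h : IsRowCuts l m T s) (h' : IsRowCuts l m T' s) :
    Set.EqOn T T' (skewCells l m) := by
  rintro ⟨i, j⟩ hc
  exact le_antisymm ((h.le_iff_lt_cut hc _).2 ((h'.le_iff_lt_cut hc _).1 le_rfl))
    ((h'.le_iff_lt_cut hc _).2 ((h.le_iff_lt_cut hc _).1 le_rfl))

lemma row_eq_Ico (h : IsRowCuts l m T s) (i k : ℕ) :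
    {j | (i, j) ∈ skewCells l m ∧ T (i, j) = k + 1} = Set.Ico (s i k) (s i (k + 1)) := by
  ext j
  constructor
  · rintro ⟨hc, hT⟩
    refine ⟨not_lt.1 fun hj => ?_, (h.le_iff_lt_cut hc _).1 hT.le⟩
    have := (h.le_iff_lt_cut hc k).2 hj
    omega
  · rintro ⟨h1, h2⟩
    have hc : (i, j) ∈ skewCells l m := ⟨(h.le_cut i k).trans h1, h2.trans_le (h.cut_le i _)⟩
    have hle := (h.le_iff_lt_cut hc _).2 h2
    have hnle := mt (h.le_iff_lt_cut hc k).1 (not_lt.2 h1)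
    exact ⟨hc, by omega⟩

lemma ncard_entry_eq (h : IsRowCuts l m T s) {R : ℕ} (hR : ∀ i, R ≤ i → l.parts i = 0)
    (k : ℕ) :
    {p ∈ skewCells l m | T p = k + 1}.ncard = ∑ i ∈ Finset.range R, rowCount s i k := by
  rw [Set.ncard_eq_sum_ncard_row ((skewCells_finite l m).subset fun p hp => hp.1)
    fun p hp => fst_lt_of_mem_skewCells hR hp.1]
  refine Finset.sum_congr rfl fun i _ => ?_
  exact (congrArg Set.ncard (h.row_eq_Ico i k)).trans (Set.ncard_Ico_nat _ _)

lemma ncard_readingPrefix_entry_eq (h : IsRowCuts l m T s) (r c k : ℕ) :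
    {p ∈ skewCells l m | (p.1 < r ∨ (p.1 = r ∧ c ≤ p.2)) ∧ T p = k + 1}.ncard
      = ∑ i ∈ Finset.range r, rowCount s i k + (s r (k + 1) - max (s r k) c) := by
  rw [Set.ncard_eq_sum_ncard_row ((skewCells_finite l m).subset fun p hp => hp.1) (R := r + 1)
    fun p hp => by rcases hp.2.1 with hr | hr <;> omega, Finset.sum_range_succ]
  congr 1
  · refine Finset.sum_congr rfl fun i hi => ?_
    have hir : i < r := Finset.mem_range.1 hi
    rw [rowCount, ← Set.ncard_Ico_nat, ← h.row_eq_Ico i k]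
    congr 1
    ext j
    exact ⟨fun ⟨hc, _, hT⟩ => ⟨hc, hT⟩, fun ⟨hc, hT⟩ => ⟨hc, Or.inl hir, hT⟩⟩
  · rw [← Set.ncard_Ico_nat]
    congr 1
    ext j
    have hrow := Set.ext_iff.1 (h.row_eq_Ico r k) j
    constructor
    · rintro ⟨hc, hr, hT⟩
      have hcj : c ≤ j := by rcases hr with hr | hr <;> [omega; exact hr.2]
      exact ⟨max_le (hrow.1 ⟨hc, hT⟩).1 hcj, (hrow.1 ⟨hc, hT⟩).2⟩
    · rintro ⟨hj, hj'⟩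
      obtain ⟨hc, hT⟩ := hrow.2 ⟨(le_max_left _ _).trans hj, hj'⟩
      exact ⟨hc, Or.inr ⟨rfl, (le_max_right _ _).trans hj⟩, hT⟩

end IsRowCuts

def rowCuts (l m : LRPartition) (T : ℕ × ℕ → ℕ) (i k : ℕ) : ℕ :=
  m.parts i + ((Finset.Ico (m.parts i) (l.parts i)).filter fun j => T (i, j) ≤ k).card

noncomputable def ofRowCuts (l m : LRPartition) (s : ℕ → ℕ → ℕ) : ℕ × ℕ → ℕ :=
  (skewCells l m).indicator fun p => sInf {k | p.2 < s p.1 k}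

structure IsLRCuts (l m n : LRPartition) (s : ℕ → ℕ → ℕ) : Prop where
  cut_zero : ∀ i, s i 0 = m.parts i
  monotone : ∀ i, Monotone (s i)
  cut_le : ∀ i k, s i k ≤ l.parts i
  exists_le_cut : ∃ K, ∀ i, l.parts i ≤ s i K
  cut_succ_le : ∀ i k, s (i + 1) (k + 1) ≤ s i k
  content : ∀ k R, (∀ i, R ≤ i → l.parts i = 0) →
    ∑ i ∈ Finset.range R, rowCount s i k = n.parts k
  lattice : ∀ r k,
    ∑ i ∈ Finset.range (r + 1), rowCount s i (k + 1) ≤ ∑ i ∈ Finset.range r, rowCount s i k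

lemma rowCount_add {s s' : ℕ → ℕ → ℕ} {i : ℕ} (hs : Monotone (s i)) (hs' : Monotone (s' i))
    (k : ℕ) : rowCount (s + s') i k = rowCount s i k + rowCount s' i k := by
  have := hs (Nat.le_add_right k 1)
  have := hs' (Nat.le_add_right k 1)
  simp only [rowCount, Pi.add_apply]
  omega

namespace IsLRTableau

variable {l m n : LRPartition} {T : ℕ × ℕ → ℕ}

lemma isRowCuts_rowCuts (H : IsLRTableau l m n T) : IsRowCuts l m T (rowCuts l m T) where
  le_cut _ _ := Nat.le_add_right _ _
  cut_le i k := by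
    have := Finset.card_filter_le (Finset.Ico (m.parts i) (l.parts i)) fun j => T (i, j) ≤ k
    have := H.sub i
    rw [Nat.card_Ico] at *
    unfold rowCuts
    omega
  le_iff_lt_cut {i j} hc k := by
    have ⟨hm, hl⟩ := mem_skewCells_mk.1 hc
    unfold rowCuts
    constructor
    · intro hT
      have hsub : Finset.Ico (m.parts i) (j + 1) ⊆
          (Finset.Ico (m.parts i) (l.parts i)).filter fun j => T (i, j) ≤ k := by
        intro j' hj'
        obtain ⟨h1, h2⟩ := Finset.mem_Ico.1 hj'
        have hc' : (i, j') ∈ skewCells l m := mem_skewCells_mk.2 ⟨h1, by omega⟩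
        exact Finset.mem_filter.2
          ⟨Finset.mem_Ico.2 hc', (H.row_weak i j' j hc' hc (by omega)).trans hT⟩
      have := Finset.card_le_card hsub
      rw [Nat.card_Ico] at this
      omega
    · intro hj
      by_contra! hT
      have hsub : ((Finset.Ico (m.parts i) (l.parts i)).filter fun j => T (i, j) ≤ k) ⊆
          Finset.Ico (m.parts i) j := by
        intro j' hj'
        obtain ⟨hc', hT'⟩ := Finset.mem_filter.1 hj'
        refine Finset.mem_Ico.2 ⟨(Finset.mem_Ico.1 hc').1, not_le.1 fun hjj => ?_⟩
        have := H.row_weak i j j' hc (Finset.mem_Ico.1 hc') hjj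
        omega
      have := Finset.card_le_card hsub
      rw [Nat.card_Ico] at this
      omega

lemma le_of_mem_skewCells (H : IsLRTableau l m n T) {N : ℕ} (hN : ∀ k, N ≤ k → n.parts k = 0)
    {p : ℕ × ℕ} (hp : p ∈ skewCells l m) : T p ≤ N := by
  by_contra! hlt
  obtain ⟨k, hk⟩ : ∃ k, T p = k + 1 := ⟨T p - 1, by omega⟩
  have hne : {q ∈ skewCells l m | T q = k + 1}.ncard ≠ 0 :=
    Set.ncard_ne_zero_of_mem ⟨hp, hk⟩ ((skewCells_finite l m).subset fun q hq => hq.1)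
  exact hne ((H.content k).trans (hN k (by omega)))

lemma isLRCuts_rowCuts (H : IsLRTableau l m n T) : IsLRCuts l m n (rowCuts l m T) := by
  have hs := H.isRowCuts_rowCuts
  refine ⟨fun i => ?_, hs.monotone, hs.cut_le, ?_, fun i k => ?_,
    fun k R hR => (hs.ncard_entry_eq hR k).symm.trans (H.content k), fun r k => ?_⟩
  · refine le_antisymm (not_lt.1 fun hlt => ?_) (hs.le_cut i 0)
    have hc : (i, m.parts i) ∈ skewCells l m := ⟨le_rfl, hlt.trans_le (hs.cut_le i 0)⟩
    have := H.pos _ hc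
    have := (hs.le_iff_lt_cut hc 0).2 hlt
    omega
  · obtain ⟨N, hN⟩ := n.eventually_zero
    refine ⟨N, fun i => ?_⟩
    by_cases hml : m.parts i < l.parts i
    · have hc : (i, l.parts i - 1) ∈ skewCells l m :=
        show m.parts i ≤ l.parts i - 1 ∧ l.parts i - 1 < l.parts i by omega
      have := (hs.le_iff_lt_cut hc N).1 (H.le_of_mem_skewCells hN hc)
      omega
    · exact (not_lt.1 hml).trans (hs.le_cut i N)
  · refine not_lt.1 fun hlt => ?_
    set j := rowCuts l m T i k
    have hc' : (i + 1, j) ∈ skewCells l m :=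
      ⟨(m.antitone' i.le_succ).trans (hs.le_cut i k), hlt.trans_le (hs.cut_le _ _)⟩
    have hc : (i, j) ∈ skewCells l m :=
      ⟨hs.le_cut i k, hc'.2.trans_le (l.antitone' i.le_succ)⟩
    have := H.col_strict i (i + 1) j hc hc' i.lt_succ_self
    have := (hs.le_iff_lt_cut hc' (k + 1)).2 hlt
    have := mt (hs.le_iff_lt_cut hc k).1 (lt_irrefl j)
    omega
  · -- cut the reading word inside row `r` just before its entries `≤ k + 1`
    have := H.lattice r (rowCuts l m T r (k + 1)) (k + 1) k.succ_pos
    rw [hs.ncard_readingPrefix_entry_eq, hs.ncard_readingPrefix_entry_eq] at this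
    have := hs.monotone r (Nat.le_add_right k 1)
    rw [Finset.sum_range_succ, rowCount]
    omega

end IsLRTableau

lemma finite_setOf_isLRTableau (l m n : LRPartition) : {T | IsLRTableau l m n T}.Finite := by
  obtain ⟨N, hN⟩ := n.eventually_zero
  have : Finite (skewCells l m) := (skewCells_finite l m).to_subtype
  refine Set.Finite.of_injOn (f := fun T (p : skewCells l m) => T p)
    (t := Set.univ.pi fun _ => Set.Iic N) (fun T hT => ?_) (fun T hT T' hT' heq => ?_)
    (Set.Finite.pi fun _ => Set.finite_Iic N)
  · exact Set.mem_univ_pi.2 fun p => hT.le_of_mem_skewCells hN p.2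
  · funext p
    by_cases hp : p ∈ skewCells l m
    · exact congrFun heq ⟨p, hp⟩
    · rw [hT.zero p hp, hT'.zero p hp]

namespace IsLRCuts

variable {l m n l' m' n' : LRPartition} {s s' : ℕ → ℕ → ℕ}

lemma antitone_cut (h : IsLRCuts l m n s) (k : ℕ) : Antitone fun i => s i k :=
  antitone_nat_of_succ_le fun i => (h.monotone (i + 1) k.le_succ).trans (h.cut_succ_le i k)

lemma isRowCuts_ofRowCuts (h : IsLRCuts l m n s) : IsRowCuts l m (ofRowCuts l m s) s where
  le_cut i k := h.cut_zero i ▸ h.monotone i (Nat.zero_le k)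
  cut_le := h.cut_le
  le_iff_lt_cut {i j} hc k := by
    rw [ofRowCuts, Set.indicator_of_mem hc]
    obtain ⟨K, hK⟩ := h.exists_le_cut
    have hne : {k | j < s i k}.Nonempty := ⟨K, hc.2.trans_le (hK i)⟩
    exact ⟨fun hk => (Nat.sInf_mem hne).trans_le (h.monotone i hk), fun hk => Nat.sInf_le hk⟩

lemma isLRTableau_ofRowCuts (h : IsLRCuts l m n s) : IsLRTableau l m n (ofRowCuts l m s) := by
  have hs := h.isRowCuts_ofRowCuts
  have hpos : ∀ p ∈ skewCells l m, 0 < ofRowCuts l m s p := by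
    rintro ⟨i, j⟩ hc
    refine Nat.pos_of_ne_zero fun h0 => ?_
    have := (hs.le_iff_lt_cut hc 0).1 h0.le
    have := (mem_skewCells_mk.1 hc).1
    rw [h.cut_zero] at *
    omega
  refine ⟨fun i => h.cut_zero i ▸ h.cut_le i 0, hpos, fun p hp => Set.indicator_of_notMem hp _,
    fun i j j' hc hc' hjj => ?_, fun i i' j hc hc' hii => ?_, fun k => ?_, fun r c k hk => ?_⟩
  · exact (hs.le_iff_lt_cut hc _).2 (hjj.trans_lt ((hs.le_iff_lt_cut hc' _).1 le_rfl))
  · obtain ⟨v, hv⟩ : ∃ v, ofRowCuts l m s (i', j) = v + 1 :=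
      ⟨_, (Nat.succ_pred_eq_of_pos (hpos _ hc')).symm⟩
    have h1 := (hs.le_iff_lt_cut hc' (v + 1)).1 hv.le
    have h2 : s i' (v + 1) ≤ s (i + 1) (v + 1) := h.antitone_cut (v + 1) hii
    have := (hs.le_iff_lt_cut hc v).2 (h1.trans_le (h2.trans (h.cut_succ_le i v)))
    omega
  · obtain ⟨R, hR⟩ := l.eventually_zero
    exact (hs.ncard_entry_eq hR k).trans (h.content k R hR)
  · obtain ⟨k, rfl⟩ : ∃ k', k = k' + 1 := ⟨k - 1, by omega⟩
    rw [hs.ncard_readingPrefix_entry_eq, hs.ncard_readingPrefix_entry_eq]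
    have := h.lattice r k
    rw [Finset.sum_range_succ] at this
    have hr : rowCount s r (k + 1) = s r (k + 1 + 1) - s r (k + 1) := rfl
    omega

lemma rowCuts_ofRowCuts (h : IsLRCuts l m n s) : rowCuts l m (ofRowCuts l m s) = s :=
  h.isLRTableau_ofRowCuts.isRowCuts_rowCuts.cuts_eq h.isRowCuts_ofRowCuts

lemma add (h : IsLRCuts l m n s) (h' : IsLRCuts l' m' n' s') :
    IsLRCuts (l + l') (m + m') (n + n') (s + s') where
  cut_zero i := by simp [h.cut_zero, h'.cut_zero]
  monotone i := (h.monotone i).add (h'.monotone i)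
  cut_le i k := add_le_add (h.cut_le i k) (h'.cut_le i k)
  exists_le_cut := by
    obtain ⟨K, hK⟩ := h.exists_le_cut
    obtain ⟨K', hK'⟩ := h'.exists_le_cut
    exact ⟨max K K', fun i => add_le_add ((hK i).trans (h.monotone i (le_max_left K K')))
      ((hK' i).trans (h'.monotone i (le_max_right K K')))⟩
  cut_succ_le i k := add_le_add (h.cut_succ_le i k) (h'.cut_succ_le i k)
  content k R hR := by
    simp only [rowCount_add (h.monotone _) (h'.monotone _), Finset.sum_add_distrib]
    rw [h.content k R fun i hi => Nat.eq_zero_of_add_eq_zero_right (hR i hi),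
      h'.content k R fun i hi => Nat.eq_zero_of_add_eq_zero_left (hR i hi)]
    rfl
  lattice r k := by
    simp only [rowCount_add (h.monotone _) (h'.monotone _), Finset.sum_add_distrib]
    exact add_le_add (h.lattice r k) (h'.lattice r k)

end IsLRCuts

lemma IsLRTableau.eq_ofRowCuts_rowCuts {l m n : LRPartition} {T : ℕ × ℕ → ℕ}
    (H : IsLRTableau l m n T) : T = ofRowCuts l m (rowCuts l m T) := by
  funext p
  by_cases hp : p ∈ skewCells l m
  · exact H.isRowCuts_rowCuts.eqOn H.isLRCuts_rowCuts.isRowCuts_ofRowCuts hp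
  · rw [H.zero p hp, ofRowCuts, Set.indicator_of_notMem hp]

/-- Lemma 3.1, first part. If `c(λ';μ',ν') ≠ 0` then
`c(λ+λ'; μ+μ', ν+ν') ≥ c(λ;μ,ν)`. -/
theorem lr_add_mono (l m n l' m' n' : LRPartition)
    (h : LRcoeff l' m' n' ≠ 0) :
    LRcoeff l m n ≤ LRcoeff (l + l') (m + m') (n + n') := by
  obtain ⟨T', hT'⟩ := Set.nonempty_of_ncard_ne_zero h
  have hcuts : ∀ {T}, IsLRTableau l m n T →
      IsLRCuts (l + l') (m + m') (n + n') (rowCuts l m T + rowCuts l' m' T') :=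
    fun hT => hT.isLRCuts_rowCuts.add hT'.isLRCuts_rowCuts
  refine Set.ncard_le_ncard_of_injOn
    (fun T => ofRowCuts (l + l') (m + m') (rowCuts l m T + rowCuts l' m' T'))
    (fun T hT => (hcuts hT).isLRTableau_ofRowCuts) (fun T₁ h₁ T₂ h₂ heq => ?_)
    (finite_setOf_isLRTableau _ _ _)
  have hsum := congrArg (rowCuts (l + l') (m + m')) heq
  simp only [(hcuts h₁).rowCuts_ofRowCuts, (hcuts h₂).rowCuts_ofRowCuts] at hsum
  rw [IsLRTableau.eq_ofRowCuts_rowCuts h₁, IsLRTableau.eq_ofRowCuts_rowCuts h₂,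
    add_right_cancel hsum]
end

section
/- Let λ, μ, ν, λ', μ', ν' be partitions with c(λ;μ,ν) ≠ 0. Then the generalised stretched LR coefficient P(n) = c(nλ+λ'; nμ+μ', nν+ν') is weakly increasing in n: P(n+1) ≥ P(n) for all n ≥ 0. -/
/-!
An LR tableau `T` of shape `λ/μ` is determined by its chain of shapes `F`, where `F k` consists
of `μ` and the boxes of `T` with entry `≤ k`. Column strictness, the content and the lattice
condition on `T` become linear equations and inequalities in `F`, `λ`, `μ` and `ν`. Hence the sum
of LR chains for `(λ, μ, ν)` and `(α, β, γ)` is an LR chain for `(λ + α, μ + β, ν + γ)`, so adding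
one fixed chain for `(λ, μ, ν)` injects the LR tableaux counted by `c(α; β, γ)` into those counted
by `c(λ + α; μ + β, ν + γ)`. Take `α = nλ + λ'`, `β = nμ + μ'`, `γ = nν + ν'`.
-/
namespace LRPartition

@[ext] theorem ext {a b : LRPartition} (h : ∀ i, a.parts i = b.parts i) : a = b := by
  cases a
  cases b
  congr
  exact funext h

theorem succ_smul_add (n : ℕ) (a b : LRPartition) : (n + 1) • a + b = a + (n • a + b) := by
  ext i
  simp only [add_parts, smul_parts]
  ring

end LRPartition

namespace LittlewoodRichardson

open Finset

section Counting

variable (a b : ℕ → ℕ)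

theorem ncard_rows (r : ℕ) :
    {p : ℕ × ℕ | p.1 < r ∧ a p.1 ≤ p.2 ∧ p.2 < b p.1}.ncard = ∑ i ∈ range r, (b i - a i) := by
  have hrows : {p : ℕ × ℕ | p.1 < r ∧ a p.1 ≤ p.2 ∧ p.2 < b p.1} =
      ↑((range r).biUnion fun i => {i} ×ˢ Ico (a i) (b i)) := by
    ext ⟨i, j⟩
    simp only [Set.mem_ofPred_eq, coe_biUnion, coe_range, Set.mem_Iio, coe_product,
      coe_singleton, coe_Ico, Set.mem_iUnion, Set.mem_prod, Set.mem_singleton_iff, Set.mem_Ico]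
    constructor
    · rintro ⟨hi, hj⟩
      exact ⟨i, hi, rfl, hj⟩
    · rintro ⟨i, hi, rfl, hj⟩
      exact ⟨hi, hj⟩
  rw [hrows, Set.ncard_coe_finset, card_biUnion]
  · simp
  · intro i _ i' _ hii'
    refine disjoint_left.2 fun p hp hp' => hii' ?_
    simp only [mem_product, mem_singleton] at hp hp'
    exact hp.1.symm.trans hp'.1

theorem ncard_prefix (r c : ℕ) :
    {p : ℕ × ℕ | (p.1 < r ∨ p.1 = r ∧ c ≤ p.2) ∧ a p.1 ≤ p.2 ∧ p.2 < b p.1}.ncard =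
      ∑ i ∈ range r, (b i - a i) + (b r - max c (a r)) := by
  let a' i := if i = r then max c (a r) else a i
  have hprefix : {p : ℕ × ℕ | (p.1 < r ∨ p.1 = r ∧ c ≤ p.2) ∧ a p.1 ≤ p.2 ∧ p.2 < b p.1} =
      {p : ℕ × ℕ | p.1 < r + 1 ∧ a' p.1 ≤ p.2 ∧ p.2 < b p.1} := by
    ext ⟨i, j⟩
    by_cases hir : i = r
    · subst hir
      simp only [Set.mem_ofPred_eq, a', if_true, true_and]
      omega
    · simp only [Set.mem_ofPred_eq, a', if_neg hir]
      omega
  rw [hprefix, ncard_rows, sum_range_succ]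
  congr 1
  · exact sum_congr rfl fun i hi => by simp [a', (mem_range.1 hi).ne]
  · simp [a']

end Counting

theorem skewCells_finite (l m : LRPartition) : (skewCells l m).Finite := by
  obtain ⟨R, hR⟩ := l.eventually_zero
  refine ((Set.finite_Iio R).prod (Set.finite_Iio (l.parts 0))).subset fun ⟨i, j⟩ hij => ?_
  have hj : j < l.parts i := hij.2
  refine ⟨Set.mem_Iio.2 ?_, hj.trans_le (l.antitone' (Nat.zero_le i))⟩
  by_contra! hi
  have := hR i hi
  omega

theorem mem_skewCells_of_le {l m : LRPartition} {i i' i'' j : ℕ} (h : (i, j) ∈ skewCells l m)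
    (h' : (i', j) ∈ skewCells l m) (hi : i ≤ i'') (hi' : i'' ≤ i') : (i'', j) ∈ skewCells l m :=
  ⟨(m.antitone' hi).trans h.1, h'.2.trans_le (l.antitone' hi')⟩

theorem _root_.IsLRTableau.le_of_mem {l m n : LRPartition} {T : ℕ × ℕ → ℕ}
    (hT : IsLRTableau l m n T) {N : ℕ} (hN : ∀ k, N ≤ k → n.parts k = 0) {p : ℕ × ℕ}
    (hp : p ∈ skewCells l m) : T p ≤ N := by
  by_contra! hlt
  have hfin : {q ∈ skewCells l m | T q = T p - 1 + 1}.Finite :=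
    (skewCells_finite l m).subset fun q hq => hq.1
  have hpos := (Set.ncard_pos hfin).2 ⟨p, hp, by omega⟩
  rw [hT.content, hN _ (by omega)] at hpos
  exact lt_irrefl 0 hpos

theorem finite_setOf_isLRTableau (l m n : LRPartition) :
    {T | IsLRTableau l m n T}.Finite := by
  obtain ⟨N, hN⟩ := n.eventually_zero
  have := (skewCells_finite l m).to_subtype
  refine Set.Finite.of_finite_image (f := fun T (p : skewCells l m) => T p) ?_ ?_
  · refine (Set.Finite.pi (t := fun _ => Set.Iic N) fun _ => Set.finite_Iic N).subset ?_
    rintro _ ⟨T, hT, rfl⟩ p -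
    exact hT.le_of_mem hN p.2
  · intro T hT T' hT' hTT'
    funext p
    by_cases hp : p ∈ skewCells l m
    · exact congrFun hTT' ⟨p, hp⟩
    · rw [hT.zero p hp, hT'.zero p hp]

/-- `F k i` is the length of row `i` of the `k`-th shape of a chain of shapes from `μ` to `λ`. -/
structure IsShapeChain (l m : LRPartition) (F : ℕ → ℕ → ℕ) : Prop where
  mono : ∀ i, Monotone (F · i)
  base : ∀ i, F 0 i = m.parts i
  top : ∃ K, ∀ k, K ≤ k → ∀ i, F k i = l.parts i

namespace IsShapeChain

variable {l m : LRPartition} {F : ℕ → ℕ → ℕ}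

theorem base_le (hF : IsShapeChain l m F) (k i : ℕ) : m.parts i ≤ F k i :=
  hF.base i ▸ hF.mono i (Nat.zero_le k)

theorem le_top (hF : IsShapeChain l m F) (k i : ℕ) : F k i ≤ l.parts i := by
  obtain ⟨K, hK⟩ := hF.top
  exact hK (max k K) (le_max_right k K) i ▸ hF.mono i (le_max_left k K)

theorem le_succ (hF : IsShapeChain l m F) (k i : ℕ) : F k i ≤ F (k + 1) i :=
  hF.mono i k.le_succ

theorem add {A B : LRPartition} {G : ℕ → ℕ → ℕ} (hF : IsShapeChain l m F)
    (hG : IsShapeChain A B G) : IsShapeChain (l + A) (m + B) (F + G) where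
  mono i _ _ hk := add_le_add (hF.mono i hk) (hG.mono i hk)
  base i := by simp [hF.base, hG.base]
  top := by
    obtain ⟨K, hK⟩ := hF.top
    obtain ⟨K', hK'⟩ := hG.top
    exact ⟨max K K', fun k hk i => by
      simp [hK k (le_of_max_le_left hk), hK' k (le_of_max_le_right hk)]⟩

end IsShapeChain

/-- The conditions on an LR tableau, read off its chain of shapes: `strip` is column strictness,
and `lattice` is the lattice condition for the entries `k + 1, k + 2` on the prefix of the reading
word that ends with the `k + 2`s of row `r`, where it is tightest. -/
structure IsLRChain (l m n : LRPartition) (F : ℕ → ℕ → ℕ) : Prop extends IsShapeChain l m F where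
  strip : ∀ k i, F (k + 1) (i + 1) ≤ F k i
  content : ∀ k R, (∀ i, R ≤ i → l.parts i = 0) →
    ∑ i ∈ range R, F (k + 1) i = ∑ i ∈ range R, F k i + n.parts k
  lattice : ∀ k r, ∑ i ∈ range (r + 1), F (k + 2) i + ∑ i ∈ range r, F k i ≤
    ∑ i ∈ range (r + 1), F (k + 1) i + ∑ i ∈ range r, F (k + 1) i

theorem IsLRChain.add {l m n A B C : LRPartition} {F G : ℕ → ℕ → ℕ} (hF : IsLRChain l m n F)
    (hG : IsLRChain A B C G) : IsLRChain (l + A) (m + B) (n + C) (F + G) where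
  toIsShapeChain := hF.toIsShapeChain.add hG.toIsShapeChain
  strip k i := add_le_add (hF.strip k i) (hG.strip k i)
  content k R hR := by
    have hlA i (hi : R ≤ i) : l.parts i = 0 ∧ A.parts i = 0 := by
      have := hR i hi
      rw [LRPartition.add_parts] at this
      omega
    simp only [Pi.add_apply, sum_add_distrib, LRPartition.add_parts,
      hF.content k R fun i hi => (hlA i hi).1, hG.content k R fun i hi => (hlA i hi).2]
    ring
  lattice k r := by
    simp only [Pi.add_apply, sum_add_distrib]
    linarith [hF.lattice k r, hG.lattice k r]

structure IsShapeChainOf (l m : LRPartition) (T : ℕ × ℕ → ℕ) (F : ℕ → ℕ → ℕ) : Prop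
    extends IsShapeChain l m F where
  le_iff : ∀ k i j, (i, j) ∈ skewCells l m → (T (i, j) ≤ k ↔ j < F k i)

def shapeChain (l m : LRPartition) (T : ℕ × ℕ → ℕ) (k i : ℕ) : ℕ :=
  m.parts i + #{j ∈ Ico (m.parts i) (l.parts i) | T (i, j) ≤ k}

open Classical in
noncomputable def ofShapeChain (l m : LRPartition) (F : ℕ → ℕ → ℕ) (p : ℕ × ℕ) : ℕ :=
  if p ∈ skewCells l m then sInf {k | p.2 < F k p.1} else 0

theorem IsShapeChain.isShapeChainOf_ofShapeChain {l m : LRPartition} {F : ℕ → ℕ → ℕ}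
    (hF : IsShapeChain l m F) : IsShapeChainOf l m (ofShapeChain l m F) F where
  toIsShapeChain := hF
  le_iff k i j hij := by
    have hne : {k | j < F k i}.Nonempty := by
      obtain ⟨K, hK⟩ := hF.top
      exact ⟨K, show j < F K i by rw [hK K le_rfl i]; exact hij.2⟩
    rw [ofShapeChain, if_pos hij]
    exact ⟨fun h => (Nat.sInf_mem hne).trans_le (hF.mono i h), fun h => Nat.sInf_le h⟩

theorem _root_.IsLRTableau.isShapeChainOf_shapeChain {l m n : LRPartition}
    {T : ℕ × ℕ → ℕ} (hT : IsLRTableau l m n T) : IsShapeChainOf l m T (shapeChain l m T) where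
  mono i _ _ hk := Nat.add_le_add_left (card_le_card (monotone_filter_right _
    fun _ _ hj => hj.trans hk)) _
  base i := by
    rw [shapeChain, filter_false_of_mem, card_empty, add_zero]
    intro j hj
    have := hT.pos (i, j) (mem_Ico.1 hj)
    omega
  top := by
    obtain ⟨N, hN⟩ := n.eventually_zero
    refine ⟨N, fun k hk i => ?_⟩
    rw [shapeChain, filter_true_of_mem fun j hj => (hT.le_of_mem hN (mem_Ico.1 hj)).trans hk,
      Nat.card_Ico]
    have := hT.sub i
    omega
  le_iff k i j hij := by
    -- by `row_weak`, the boxes of row `i` with entry `≤ k` form an initial segment of the row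
    have hmj : m.parts i ≤ j := hij.1
    have hjl : j < l.parts i := hij.2
    constructor
    · intro hle
      have hsub : Ico (m.parts i) (j + 1) ⊆ {j ∈ Ico (m.parts i) (l.parts i) | T (i, j) ≤ k} := by
        intro j' hj'
        rw [mem_Ico] at hj'
        have hcell : (i, j') ∈ skewCells l m := ⟨hj'.1, show j' < l.parts i by omega⟩
        exact mem_filter.2 ⟨mem_Ico.2 hcell,
          (hT.row_weak i j' j hcell hij (by omega)).trans hle⟩
      have := card_le_card hsub
      rw [Nat.card_Ico] at this
      rw [shapeChain]
      omega
    · intro hlt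
      by_contra! hgt
      have hsub : {j ∈ Ico (m.parts i) (l.parts i) | T (i, j) ≤ k} ⊆ Ico (m.parts i) j := by
        intro j' hj'
        obtain ⟨hcell, hj'k⟩ := mem_filter.1 hj'
        refine mem_Ico.2 ⟨(mem_Ico.1 hcell).1, ?_⟩
        by_contra! hjj'
        have := hT.row_weak i j j' hij (mem_Ico.1 hcell) hjj'
        omega
      have := card_le_card hsub
      rw [Nat.card_Ico] at this
      rw [shapeChain] at hlt
      omega

namespace IsShapeChainOf

variable {l m n : LRPartition} {T : ℕ × ℕ → ℕ} {F : ℕ → ℕ → ℕ}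

theorem pos (h : IsShapeChainOf l m T F) {p : ℕ × ℕ} (hp : p ∈ skewCells l m) : 0 < T p := by
  obtain ⟨i, j⟩ := p
  by_contra! h0
  have := (h.le_iff 0 i j hp).1 h0
  have hmj : m.parts i ≤ j := hp.1
  rw [h.base] at this
  omega

theorem row_weak (h : IsShapeChainOf l m T F) (i j j' : ℕ) (hj : (i, j) ∈ skewCells l m)
    (hj' : (i, j') ∈ skewCells l m) (hjj' : j ≤ j') : T (i, j) ≤ T (i, j') :=
  (h.le_iff _ i j hj).2 (hjj'.trans_lt ((h.le_iff _ i j' hj').1 le_rfl))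

theorem col_strict (h : IsShapeChainOf l m T F) (hstrip : ∀ k i, F (k + 1) (i + 1) ≤ F k i)
    (i i' j : ℕ) (hi : (i, j) ∈ skewCells l m) (hi' : (i', j) ∈ skewCells l m) (hii' : i < i') :
    T (i, j) < T (i', j) := by
  refine strictMonoOn_of_lt_succ (f := fun r => T (r, j)) Set.ordConnected_Icc ?_
    ⟨le_rfl, hii'.le⟩ ⟨hii'.le, le_rfl⟩ hii'
  intro r _ hr hr'
  rw [Order.succ_eq_add_one] at hr' ⊢
  have hcell := mem_skewCells_of_le hi hi' hr.1 hr.2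
  have hcell' := mem_skewCells_of_le hi hi' hr'.1 hr'.2
  have hpos := h.pos hcell'
  have hj := (h.le_iff _ _ j hcell').1 le_rfl
  rw [← Nat.sub_add_cancel hpos] at hj
  have := (h.le_iff _ r j hcell).2 (hj.trans_le (hstrip _ r))
  omega

theorem eq_of_mem {T' : ℕ × ℕ → ℕ} (h : IsShapeChainOf l m T F) (h' : IsShapeChainOf l m T' F)
    {p : ℕ × ℕ} (hp : p ∈ skewCells l m) : T p = T' p :=
  le_antisymm ((h.le_iff _ p.1 p.2 hp).2 ((h'.le_iff _ p.1 p.2 hp).1 le_rfl))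
    ((h'.le_iff _ p.1 p.2 hp).2 ((h.le_iff _ p.1 p.2 hp).1 le_rfl))

theorem eq_shapeChain (h : IsShapeChainOf l m T F) : F = shapeChain l m T := by
  funext k i
  have hrow : {j ∈ Ico (m.parts i) (l.parts i) | T (i, j) ≤ k} = Ico (m.parts i) (F k i) := by
    ext j
    simp only [mem_filter, mem_Ico]
    constructor
    · rintro ⟨hcell, hjk⟩
      exact ⟨hcell.1, (h.le_iff k i j hcell).1 hjk⟩
    · rintro ⟨hmj, hjF⟩
      have hcell : (i, j) ∈ skewCells l m := ⟨hmj, hjF.trans_le (h.le_top k i)⟩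
      exact ⟨hcell, (h.le_iff k i j hcell).2 hjF⟩
  rw [shapeChain, hrow, Nat.card_Ico]
  have := h.base_le k i
  omega

theorem mem_and_eq_iff (h : IsShapeChainOf l m T F) (k i j : ℕ) :
    (i, j) ∈ skewCells l m ∧ T (i, j) = k + 1 ↔ F k i ≤ j ∧ j < F (k + 1) i := by
  constructor
  · rintro ⟨hcell, hT⟩
    have h1 := h.le_iff k i j hcell
    have h2 := h.le_iff (k + 1) i j hcell
    omega
  · rintro ⟨hkj, hjk⟩
    have hcell : (i, j) ∈ skewCells l m :=
      ⟨(h.base_le k i).trans hkj, hjk.trans_le (h.le_top _ i)⟩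
    have h1 := h.le_iff k i j hcell
    have h2 := h.le_iff (k + 1) i j hcell
    exact ⟨hcell, by omega⟩

theorem ncard_prefix_eq (h : IsShapeChainOf l m T F) (r c k : ℕ) :
    {p ∈ skewCells l m | (p.1 < r ∨ p.1 = r ∧ c ≤ p.2) ∧ T p = k + 1}.ncard =
      ∑ i ∈ range r, (F (k + 1) i - F k i) + (F (k + 1) r - max c (F k r)) := by
  rw [← ncard_prefix]
  congr 1
  ext ⟨i, j⟩
  have := h.mem_and_eq_iff k i j
  simp only [Set.mem_ofPred_eq] at this ⊢
  tauto

theorem ncard_eq (h : IsShapeChainOf l m T F) (k : ℕ) {R : ℕ}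
    (hR : ∀ i, R ≤ i → l.parts i = 0) :
    {p ∈ skewCells l m | T p = k + 1}.ncard = ∑ i ∈ range R, (F (k + 1) i - F k i) := by
  rw [← ncard_rows]
  congr 1
  ext ⟨i, j⟩
  have := h.le_top (k + 1) i
  have := hR i
  simp only [Set.mem_ofPred_eq]
  rw [h.mem_and_eq_iff]
  omega

theorem isLRChain (h : IsShapeChainOf l m T F) (hT : IsLRTableau l m n T) :
    IsLRChain l m n F where
  toIsShapeChain := h.toIsShapeChain
  strip k i := by
    by_contra! hlt
    have below : (i + 1, F k i) ∈ skewCells l m :=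
      ⟨(m.antitone' i.le_succ).trans (h.base_le k i), hlt.trans_le (h.le_top _ _)⟩
    have above : (i, F k i) ∈ skewCells l m :=
      ⟨h.base_le k i, below.2.trans_le (l.antitone' i.le_succ)⟩
    have h1 := (h.le_iff (k + 1) _ _ below).2 hlt
    have h2 := (h.le_iff k _ _ above).not.2 (lt_irrefl _)
    have := hT.col_strict i (i + 1) _ above below i.lt_succ_self
    omega
  content k R hR := by
    have hcount := h.ncard_eq k hR
    rw [hT.content, sum_tsub_distrib _ fun i _ => h.le_succ k i] at hcount
    have := sum_le_sum fun i (_ : i ∈ range R) => h.le_succ k i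
    omega
  lattice k r := by
    have hlat := hT.lattice r (F (k + 1) r) (k + 1) k.succ_pos
    rw [h.ncard_prefix_eq, h.ncard_prefix_eq, sum_tsub_distrib _ fun i _ => h.le_succ k i,
      sum_tsub_distrib _ fun i _ => h.le_succ (k + 1) i] at hlat
    have := sum_le_sum fun i (_ : i ∈ range r) => h.le_succ k i
    have := sum_le_sum fun i (_ : i ∈ range r) => h.le_succ (k + 1) i
    have := h.le_succ (k + 1) r
    simp only [sum_range_succ, Nat.add_assoc, Nat.reduceAdd] at *
    omega

theorem isLRTableau (h : IsShapeChainOf l m T F) (hF : IsLRChain l m n F)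
    (hzero : ∀ p, p ∉ skewCells l m → T p = 0) : IsLRTableau l m n T where
  sub i := (h.base_le 0 i).trans (h.le_top 0 i)
  pos _ hp := h.pos hp
  zero := hzero
  row_weak := h.row_weak
  col_strict := h.col_strict hF.strip
  content k := by
    obtain ⟨R, hR⟩ := l.eventually_zero
    have := hF.content k R hR
    rw [h.ncard_eq k hR, sum_tsub_distrib _ fun i _ => h.le_succ k i]
    omega
  lattice r c k hk := by
    obtain ⟨k, rfl⟩ : ∃ k', k = k' + 1 := ⟨k - 1, by omega⟩
    rw [h.ncard_prefix_eq, h.ncard_prefix_eq, sum_tsub_distrib _ fun i _ => h.le_succ k i,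
      sum_tsub_distrib _ fun i _ => h.le_succ (k + 1) i]
    have := hF.lattice k r
    have := sum_le_sum fun i (_ : i ∈ range r) => h.le_succ k i
    have := sum_le_sum fun i (_ : i ∈ range r) => h.le_succ (k + 1) i
    have := h.le_succ k r
    have := h.le_succ (k + 1) r
    simp only [sum_range_succ, Nat.add_assoc, Nat.reduceAdd] at *
    omega

end IsShapeChainOf

variable {l m n : LRPartition}

theorem setOf_isLRChain_eq_image :
    {F | IsLRChain l m n F} = shapeChain l m '' {T | IsLRTableau l m n T} := by
  ext F
  constructor
  · intro hF
    have h := hF.toIsShapeChain.isShapeChainOf_ofShapeChain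
    exact ⟨_, h.isLRTableau hF fun p hp => if_neg hp, h.eq_shapeChain.symm⟩
  · rintro ⟨T, hT, rfl⟩
    exact hT.isShapeChainOf_shapeChain.isLRChain hT

theorem injOn_shapeChain : Set.InjOn (shapeChain l m) {T | IsLRTableau l m n T} := by
  intro T hT T' hT' hTT'
  have h := hT.isShapeChainOf_shapeChain
  rw [hTT'] at h
  funext p
  by_cases hp : p ∈ skewCells l m
  · exact h.eq_of_mem hT'.isShapeChainOf_shapeChain hp
  · rw [hT.zero p hp, hT'.zero p hp]

theorem ncard_setOf_isLRChain : {F | IsLRChain l m n F}.ncard = LRcoeff l m n := by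
  rw [setOf_isLRChain_eq_image, injOn_shapeChain.ncard_image, LRcoeff]

theorem LRcoeff_le_LRcoeff_add (h : LRcoeff l m n ≠ 0) (A B C : LRPartition) :
    LRcoeff A B C ≤ LRcoeff (l + A) (m + B) (n + C) := by
  obtain ⟨F, hF⟩ : {F | IsLRChain l m n F}.Nonempty :=
    Set.nonempty_of_ncard_ne_zero (ncard_setOf_isLRChain ▸ h)
  rw [← ncard_setOf_isLRChain, ← ncard_setOf_isLRChain]
  refine Set.ncard_le_ncard_of_injOn (F + ·) (fun G hG => hF.add hG)
    (add_right_injective F).injOn ?_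
  rw [setOf_isLRChain_eq_image]
  exact (finite_setOf_isLRTableau _ _ _).image _

end LittlewoodRichardson

/-- Remark 3.3. If `c(λ;μ,ν) ≠ 0`, then
`P(n) = c(nλ+λ'; nμ+μ', nν+ν')` is weakly increasing in `n`. -/
theorem P_weakly_increasing (l m nu l' m' nu' : LRPartition)
    (h : LRcoeff l m nu ≠ 0) (n : ℕ) :
    Pfun l m nu l' m' nu' n ≤ Pfun l m nu l' m' nu' (n + 1) := by
  simp only [Pfun, LRPartition.succ_smul_add]
  exact LittlewoodRichardson.LRcoeff_le_LRcoeff_add h _ _ _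
end
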